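/- Let X be a p × n real matrix, δ ∈ ℝ^p, T ⊆ {1, …, p} with |T| ≤ s, and let μ ≥ 0 and κ > 0. Suppose: (i) ‖δ_{T^c}‖_1 ≤ 3 ‖δ_T‖_1; (ii) (1/n) ‖X^τ δ‖_2^2 ≥ κ^2 ‖δ‖_2^2; and (iii) ‖ (1/n) X X^τ δ ‖_∞ ≤ μ. Then ‖δ‖_2 ≤ 4 √s · μ / κ^2. -/

import Mathlib

/-!
On the cone `‖δ_{Tᶜ}‖₁ ≤ 3 ‖δ_T‖₁` we have `‖δ‖₁ ≤ 4 ‖δ_T‖₁ ≤ 4 √s ‖δ‖₂` by Cauchy–Schwarz.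
Since `(1/n) ‖Xᵀ δ‖₂² = ⟨δ, (1/n) X Xᵀ δ⟩`, Hölder's inequality and the restricted eigenvalue
condition give `κ² ‖δ‖₂² ≤ ‖δ‖₁ μ ≤ 4 √s μ ‖δ‖₂`; divide by `κ² ‖δ‖₂`.
-/

open Matrix

/-- The Euclidean norm of a real vector. -/
noncomputable def vecNorm {ι : Type*} [Fintype ι] (v : ι → ℝ) : ℝ :=
  Real.sqrt (∑ i, v i ^ 2)

/-- The entrywise supremum norm of a real vector. -/
noncomputable def vecSupNorm {ι : Type*} [Fintype ι] (v : ι → ℝ) : ℝ :=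
  ⨆ i, |v i|

open Finset

section VecNorm

variable {ι : Type*} [Fintype ι]

lemma vecNorm_nonneg (v : ι → ℝ) : 0 ≤ vecNorm v :=
  Real.sqrt_nonneg _

lemma vecNorm_sq (v : ι → ℝ) : vecNorm v ^ 2 = ∑ i, v i ^ 2 :=
  Real.sq_sqrt (sum_nonneg fun _ _ => sq_nonneg _)

lemma vecSupNorm_nonneg (v : ι → ℝ) : 0 ≤ vecSupNorm v :=
  Real.iSup_nonneg fun _ => abs_nonneg _

lemma abs_le_vecSupNorm (v : ι → ℝ) (i : ι) : |v i| ≤ vecSupNorm v :=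
  le_ciSup (Set.finite_range fun i => |v i|).bddAbove i

lemma dotProduct_le_sum_abs_mul_vecSupNorm (v w : ι → ℝ) :
    v ⬝ᵥ w ≤ (∑ i, |v i|) * vecSupNorm w := by
  rw [sum_mul]
  refine sum_le_sum fun i _ => ?_
  calc v i * w i ≤ |v i| * |w i| := (le_abs_self _).trans_eq (abs_mul _ _)
    _ ≤ |v i| * vecSupNorm w := mul_le_mul_of_nonneg_left (abs_le_vecSupNorm w i) (abs_nonneg _)

lemma sum_abs_le_sqrt_card_mul_vecNorm (v : ι → ℝ) (T : Finset ι) :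
    ∑ i ∈ T, |v i| ≤ Real.sqrt #T * vecNorm v := by
  have hT : (∑ i ∈ T, |v i|) ^ 2 ≤ (#T : ℝ) * ∑ i, v i ^ 2 :=
    calc (∑ i ∈ T, |v i|) ^ 2 ≤ #T * ∑ i ∈ T, |v i| ^ 2 := sq_sum_le_card_mul_sum_sq
      _ ≤ #T * ∑ i, v i ^ 2 := by
        simp only [sq_abs]
        exact mul_le_mul_of_nonneg_left (sum_le_univ_sum_of_nonneg fun i => sq_nonneg (v i))
          (Nat.cast_nonneg _)
  rw [vecNorm, ← Real.sqrt_mul (Nat.cast_nonneg _)]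
  exact Real.le_sqrt_of_sq_le hT

end VecNorm

lemma sum_abs_le_of_sum_compl_le {ι : Type*} [Fintype ι] [DecidableEq ι] (v : ι → ℝ)
    (T : Finset ι) (c : ℝ) (hcone : ∑ i ∈ Tᶜ, |v i| ≤ c * ∑ i ∈ T, |v i|) :
    ∑ i, |v i| ≤ (1 + c) * ∑ i ∈ T, |v i| := by
  rw [← sum_add_sum_compl T, add_comm]
  linarith

lemma dotProduct_mulVec_mul_transpose {m k : Type*} [Fintype m] [Fintype k] {R : Type*}
    [CommRing R] (X : Matrix m k R) (v : m → R) :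
    v ⬝ᵥ (X * Xᵀ) *ᵥ v = ∑ j, (Xᵀ *ᵥ v) j ^ 2 := by
  rw [← mulVec_mulVec, dotProduct_mulVec, ← mulVec_transpose]
  simp only [dotProduct, sq]

lemma le_div_of_mul_sq_le_mul {N a b : ℝ} (hN : 0 ≤ N) (ha : 0 < a) (hb : 0 ≤ b)
    (h : a * N ^ 2 ≤ b * N) : N ≤ b / a := by
  rcases hN.eq_or_lt with rfl | hN
  · positivity
  · rw [le_div_iff₀ ha]
    nlinarith

theorem stmt_12_general (p n s : ℕ)
    (X : Matrix (Fin p) (Fin n) ℝ) (δ : Fin p → ℝ)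
    (T : Finset (Fin p)) (hT : T.card ≤ s)
    (μ κ : ℝ) (hκ : 0 < κ)
    (hcone : (∑ i ∈ Tᶜ, |δ i|) ≤ 3 * ∑ i ∈ T, |δ i|)
    (hRE : κ ^ 2 * ∑ i, δ i ^ 2 ≤ (n : ℝ)⁻¹ * ∑ j, (Xᵀ.mulVec δ) j ^ 2)
    (hgrad : vecSupNorm ((n : ℝ)⁻¹ • (X * Xᵀ).mulVec δ) ≤ μ) :
    vecNorm δ ≤ 4 * Real.sqrt s * μ / κ ^ 2 := by
  have hl1 : ∑ i, |δ i| ≤ 4 * Real.sqrt s * vecNorm δ :=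
    calc ∑ i, |δ i| ≤ (1 + 3) * ∑ i ∈ T, |δ i| := sum_abs_le_of_sum_compl_le δ T 3 hcone
      _ = 4 * ∑ i ∈ T, |δ i| := by norm_num
      _ ≤ 4 * (Real.sqrt #T * vecNorm δ) := by
        gcongr; exact sum_abs_le_sqrt_card_mul_vecNorm δ T
      _ ≤ 4 * Real.sqrt s * vecNorm δ := by
        rw [← mul_assoc]; gcongr; exact vecNorm_nonneg δ
  have hμ : 0 ≤ μ := (vecSupNorm_nonneg _).trans hgrad
  refine le_div_of_mul_sq_le_mul (vecNorm_nonneg δ) (by positivity) (by positivity) ?_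
  calc κ ^ 2 * vecNorm δ ^ 2 ≤ (n : ℝ)⁻¹ * ∑ j, (Xᵀ *ᵥ δ) j ^ 2 := by rwa [vecNorm_sq]
    _ = δ ⬝ᵥ (n : ℝ)⁻¹ • (X * Xᵀ) *ᵥ δ := by
      rw [dotProduct_smul, dotProduct_mulVec_mul_transpose, smul_eq_mul]
    _ ≤ (∑ i, |δ i|) * vecSupNorm ((n : ℝ)⁻¹ • (X * Xᵀ) *ᵥ δ) :=
      dotProduct_le_sum_abs_mul_vecSupNorm _ _
    _ ≤ 4 * Real.sqrt s * vecNorm δ * μ :=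
      mul_le_mul hl1 hgrad (vecSupNorm_nonneg _) (mul_nonneg (by positivity) (vecNorm_nonneg δ))
    _ = 4 * Real.sqrt s * μ * vecNorm δ := by ring

/-- Basic bound for a vector in the restricted-eigenvalue cone. -/
theorem stmt_12 (p n s : ℕ) (hn : 0 < n)
    (X : Matrix (Fin p) (Fin n) ℝ) (δ : Fin p → ℝ)
    (T : Finset (Fin p)) (hT : T.card ≤ s)
    (μ κ : ℝ) (hμ : 0 ≤ μ) (hκ : 0 < κ)
    (hcone : (∑ i ∈ Tᶜ, |δ i|) ≤ 3 * ∑ i ∈ T, |δ i|)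
    (hRE : κ ^ 2 * ∑ i, δ i ^ 2 ≤ (n : ℝ)⁻¹ * ∑ j, (Xᵀ.mulVec δ) j ^ 2)
    (hgrad : vecSupNorm ((n : ℝ)⁻¹ • (X * Xᵀ).mulVec δ) ≤ μ) :
    vecNorm δ ≤ 4 * Real.sqrt s * μ / κ ^ 2 :=
  stmt_12_general p n s X δ T hT μ κ hκ hcone hRE hgrad
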